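/- arXiv:2302.06069 — 5 statements merged into one kernel-verified Lean document; each statement's English description precedes it below -/
import Mathlib

section
/- Let β : G → G'' be a continuous surjective homomorphism of torsion-by-profinite topological abelian groups such that, for some choices of torsion-by-profinite presentations, the open profinite subgroup G''_pf of G'' is contained in β(G_pf). Then the induced map G/Ker(β) → G'' is an isomorphism of topological abelian groups, where G/Ker(β) carries the quotient topology. -/
/-- A torsion-by-profinite presentation of a topological abelian group `G`:
an open subgroup that is profinite (compact, Hausdorff, totally disconnected)
with torsion quotient. -/
def IsTorsionByProfinitePresentation {G : Type*} [AddCommGroup G] [TopologicalSpace G]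
    (H : AddSubgroup G) : Prop :=
  IsOpen (H : Set G) ∧ IsCompact (H : Set G) ∧ IsTotallyDisconnected (H : Set G) ∧
    ∀ x : G ⧸ H, ∃ n : ℕ, 0 < n ∧ n • x = 0

/-!
Everything reduces to showing that `β` is an open map, and by translation it suffices that
`β '' V` is a neighbourhood of `0` for every open `V ∋ 0`. The compact set `C = H \ (V + ker β)`
has compact, hence closed, image avoiding `0`; removing it from the neighbourhood
`β '' H ⊇ H''` of `0` leaves a neighbourhood of `0`, and every point of `β '' H` outside
`β '' C` lies in `β '' V`.
-/

open Set Filter Topology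
open scoped Pointwise

namespace AddMonoidHom

variable {G G' : Type*} [AddGroup G] [TopologicalSpace G] [IsTopologicalAddGroup G]
  [AddGroup G'] [TopologicalSpace G'] [T2Space G'] {β : G →+ G'} {K : Set G}

theorem image_mem_nhds_zero_of_isCompact (hβ : Continuous β) (hK : IsCompact K)
    (hβK : β '' K ∈ 𝓝 0) {V : Set G} (hV : IsOpen V) (hV0 : (0 : G) ∈ V) :
    β '' V ∈ 𝓝 0 := by
  set C := K \ (V + (β.ker : Set G))
  have hC : IsCompact (β '' C) := (hK.diff hV.add_right).image hβ
  have h0C : (0 : G') ∉ β '' C := by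
    rintro ⟨c, ⟨-, hcV⟩, hc0⟩
    exact hcV ⟨0, hV0, c, hc0, zero_add c⟩
  refine mem_of_superset (inter_mem hβK (hC.isClosed.isOpen_compl.mem_nhds h0C)) ?_
  rintro _ ⟨⟨x, hxK, rfl⟩, hxC⟩
  have hxV : x ∈ V + (β.ker : Set G) := by
    by_contra hx
    exact hxC ⟨x, ⟨hxK, hx⟩, rfl⟩
  obtain ⟨v, hv, k, hk, rfl⟩ := hxV
  exact ⟨v, hv, by rw [map_add, mem_ker.mp hk, add_zero]⟩

theorem isOpenMap_of_isCompact_of_image_mem_nhds [IsTopologicalAddGroup G'] (hβ : Continuous β)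
    (hK : IsCompact K) (hβK : β '' K ∈ 𝓝 0) : IsOpenMap β := by
  refine IsTopologicalAddGroup.isOpenMap_iff_nhds_zero.mpr fun W hW => ?_
  obtain ⟨V, hVW, hV, hV0⟩ := mem_nhds_iff.mp (mem_map.mp hW)
  exact mem_of_superset (image_mem_nhds_zero_of_isCompact hβ hK hβK hV hV0)
    (image_subset_iff.mpr hVW)

end AddMonoidHom

namespace QuotientAddGroup

variable {G G' : Type*} [AddGroup G] [TopologicalSpace G] [AddGroup G'] [TopologicalSpace G']
  {β : G →+ G'} (hβsurj : Function.Surjective β)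

theorem continuous_quotientKerEquivOfSurjective (hβ : Continuous β) :
    Continuous (quotientKerEquivOfSurjective β hβsurj) :=
  continuous_quot_lift _ hβ

theorem isOpenMap_quotientKerEquivOfSurjective (hβ : IsOpenMap β) :
    IsOpenMap (quotientKerEquivOfSurjective β hβsurj) :=
  IsOpenMap.of_comp continuous_quot_mk mk_surjective hβ

end QuotientAddGroup

theorem quotient_iso_of_torsion_by_profinite_general
    {G G'' : Type*} [AddCommGroup G] [TopologicalSpace G] [IsTopologicalAddGroup G]
    [AddCommGroup G''] [TopologicalSpace G''] [IsTopologicalAddGroup G'']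
    [T2Space G'']
    (H : AddSubgroup G) (hH : IsTorsionByProfinitePresentation H)
    (H'' : AddSubgroup G'') (hH'' : IsTorsionByProfinitePresentation H'')
    (β : G →+ G'') (hβcont : Continuous β) (hβsurj : Function.Surjective β)
    (hsub : (H'' : Set G'') ⊆ β '' (H : Set G)) :
    ∃ e : (G ⧸ β.ker) ≃+ G'', Continuous e ∧ Continuous e.symm ∧
      ∀ x : G, e (QuotientAddGroup.mk x) = β x := by
  have hβH : β '' (H : Set G) ∈ 𝓝 0 := mem_of_superset (hH''.1.mem_nhds H''.zero_mem) hsub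
  have hβopen : IsOpenMap β :=
    AddMonoidHom.isOpenMap_of_isCompact_of_image_mem_nhds hβcont hH.2.1 hβH
  set e := QuotientAddGroup.quotientKerEquivOfSurjective β hβsurj
  have hecont : Continuous e :=
    QuotientAddGroup.continuous_quotientKerEquivOfSurjective hβsurj hβcont
  have heopen : IsOpenMap e :=
    QuotientAddGroup.isOpenMap_quotientKerEquivOfSurjective hβsurj hβopen
  exact ⟨e, hecont, (e.toEquiv.toHomeomorphOfContinuousOpen hecont heopen).symm.continuous,
    fun _ => rfl⟩

/-- Let `β : G → G''` be a continuous surjective homomorphism of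
torsion-by-profinite topological abelian groups such that, for some torsion-by-profinite
presentations, the open profinite subgroup `H''` of `G''` is contained in `β(H)`.
Then the induced map `G ⧸ ker β → G''` is an isomorphism of topological abelian groups,
where `G ⧸ ker β` carries the quotient topology. -/
theorem quotient_iso_of_torsion_by_profinite
    {G G'' : Type*} [AddCommGroup G] [TopologicalSpace G] [IsTopologicalAddGroup G]
    [AddCommGroup G''] [TopologicalSpace G''] [IsTopologicalAddGroup G'']
    [LocallyCompactSpace G] [T2Space G] [LocallyCompactSpace G''] [T2Space G'']
    (H : AddSubgroup G) (hH : IsTorsionByProfinitePresentation H)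
    (H'' : AddSubgroup G'') (hH'' : IsTorsionByProfinitePresentation H'')
    (β : G →+ G'') (hβcont : Continuous β) (hβsurj : Function.Surjective β)
    (hsub : (H'' : Set G'') ⊆ β '' (H : Set G)) :
    ∃ e : (G ⧸ β.ker) ≃+ G'', Continuous e ∧ Continuous e.symm ∧
      ∀ x : G, e (QuotientAddGroup.mk x) = β x :=
  quotient_iso_of_torsion_by_profinite_general H hH H'' hH'' β hβcont hβsurj hsub
end

section
/- Let 0 → G' → G → G'' → 0 be a short exact sequence of torsion-by-profinite topological abelian groups (with continuous maps, G' having the subspace topology and G'' the quotient topology), such that G''_pf ⊆ β(G_pf) for some torsion-by-profinite presentations. Then the induced sequence of continuous-character groups 0 → Hom_cont(G'', ℚ/ℤ) → Hom_cont(G, ℚ/ℤ) → Hom_cont(G', ℚ/ℤ) → 0 is exact, where ℚ/ℤ has the discrete topology. -/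
/-!
Injectivity and exactness in the middle are formal: `β` is a surjective quotient map whose kernel
is the image of `α`, so a character of `G` with open kernel killing `α(G')` descends to `G''` with
open kernel. For surjectivity, the open profinite subgroup gives `G` arbitrarily small open
subgroups, so a character `χ'` of `G'` with open kernel kills `α⁻¹(V)` for some open subgroup `V`
of `G`. Then `χ'` factors through `G' ⧸ α⁻¹(V)`, which embeds into `G ⧸ V`, and extends to `G ⧸ V`
because `ℚ/ℤ` is divisible, hence an injective abelian group.
-/

/-- The group `ℚ/ℤ`, regarded with the discrete topology (so that a homomorphism
`G →+ QZ` is continuous if and only if its kernel is open in `G`). -/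
abbrev QZ : Type := ℚ ⧸ AddSubgroup.zmultiples (1 : ℚ)

open Topology

theorem AddMonoidHom.exists_ker_le_comp_eq_of_comap_le_ker {A B Q : Type*} [AddCommGroup A]
    [AddCommGroup B] [AddCommGroup Q] [DivisibleBy Q ℤ] (f : A →+ B) (V : AddSubgroup B)
    (χ' : A →+ Q) (hV : V.comap f ≤ χ'.ker) :
    ∃ χ : B →+ Q, V ≤ χ.ker ∧ χ.comp f = χ' := by
  set i := QuotientAddGroup.map (V.comap f) V f le_rfl
  have hi : Function.Injective i := by
    refine (injective_iff_map_eq_zero i).2 fun a ha => ?_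
    induction a using QuotientAddGroup.induction_on with
    | H a => exact (QuotientAddGroup.eq_zero_iff a).2 ((QuotientAddGroup.eq_zero_iff (f a)).1 ha)
  obtain ⟨ψ, hψ⟩ := (Module.Baer.of_divisible Q).extension_property_addMonoidHom i hi
    (QuotientAddGroup.lift _ χ' hV)
  refine ⟨ψ.comp (QuotientAddGroup.mk' V), fun b hb => ?_, ?_⟩
  · simp [(QuotientAddGroup.eq_zero_iff b).2 hb]
  · ext a
    exact DFunLike.congr_fun hψ (a : A ⧸ V.comap f)

theorem Topology.IsQuotientMap.exists_isOpen_ker_comp_eq {A B Q : Type*} [AddGroup A]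
    [TopologicalSpace A] [AddGroup B] [TopologicalSpace B] [AddGroup Q] {β : A →+ B}
    (hβ : IsQuotientMap β) {χ : A →+ Q} (hχ : IsOpen (χ.ker : Set A)) (hker : β.ker ≤ χ.ker) :
    ∃ χ'' : B →+ Q, IsOpen (χ''.ker : Set B) ∧ χ''.comp β = χ := by
  set χ'' := β.liftOfRightInverse _ (Function.rightInverse_surjInv hβ.surjective) ⟨χ, hker⟩
  have hcomp : χ''.comp β = χ := β.liftOfRightInverse_comp _ _ _
  refine ⟨χ'', hβ.isOpen_preimage.mp ?_, hcomp⟩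
  rw [← hcomp] at hχ
  exact hχ

theorem exists_openAddSubgroup_subset_of_isOpen {G : Type*} [AddGroup G] [TopologicalSpace G]
    [IsTopologicalAddGroup G] {H : AddSubgroup G} (hHopen : IsOpen (H : Set G))
    (hHcomp : IsCompact (H : Set G)) (hHtd : IsTotallyDisconnected (H : Set G)) {U : Set G}
    (hU : IsOpen U) (h0U : (0 : G) ∈ U) :
    ∃ V : OpenAddSubgroup G, (V : Set G) ⊆ U := by
  have : CompactSpace H := isCompact_iff_compactSpace.mp hHcomp
  have : TotallyDisconnectedSpace H := totallyDisconnectedSpace_subtype_iff.mpr hHtd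
  obtain ⟨W, hW⟩ := ProfiniteGrp.exist_openNormalAddSubgroup_sub_open_nhds_of_zero
    (hU.preimage continuous_subtype_val) (show ((0 : H) : G) ∈ U from h0U)
  refine ⟨⟨W.toAddSubgroup.map H.subtype, hHopen.isOpenMap_subtype_val _ W.isOpen⟩, ?_⟩
  rintro _ ⟨w, hw, rfl⟩
  exact hW hw

theorem Topology.IsInducing.exists_isOpen_ker_comp_eq {G' G Q : Type*} [AddCommGroup G']
    [TopologicalSpace G'] [AddCommGroup G] [TopologicalSpace G] [IsTopologicalAddGroup G]
    [AddCommGroup Q] [DivisibleBy Q ℤ] {H : AddSubgroup G} (hHopen : IsOpen (H : Set G))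
    (hHcomp : IsCompact (H : Set G)) (hHtd : IsTotallyDisconnected (H : Set G)) {α : G' →+ G}
    (hα : IsInducing α) {χ' : G' →+ Q} (hχ' : IsOpen (χ'.ker : Set G')) :
    ∃ χ : G →+ Q, IsOpen (χ.ker : Set G) ∧ χ.comp α = χ' := by
  obtain ⟨U, hU, hUα⟩ := hα.isOpen_iff.mp hχ'
  have h0U : (0 : G) ∈ U := by
    simpa using (hUα ▸ χ'.ker.zero_mem : (0 : G') ∈ α ⁻¹' U)
  obtain ⟨V, hVU⟩ := exists_openAddSubgroup_subset_of_isOpen hHopen hHcomp hHtd hU h0U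
  have hVα : V.toAddSubgroup.comap α ≤ χ'.ker := fun x hx =>
    show x ∈ (χ'.ker : Set G') from hUα ▸ hVU hx
  obtain ⟨χ, hVχ, hχ⟩ := α.exists_ker_le_comp_eq_of_comap_le_ker V.toAddSubgroup χ' hVα
  exact ⟨χ, AddSubgroup.isOpen_mono hVχ V.isOpen, hχ⟩

theorem dual_sequence_exact_general
    {G' G G'' : Type*}
    [AddCommGroup G'] [TopologicalSpace G']
    [AddCommGroup G] [TopologicalSpace G] [IsTopologicalAddGroup G]
    [AddCommGroup G''] [TopologicalSpace G'']
    (H : AddSubgroup G) (hH : IsTorsionByProfinitePresentation H)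
    (α : G' →+ G) (β : G →+ G'')
    (hαemb : Topology.IsEmbedding α) (hβquot : Topology.IsQuotientMap β)
    (hexact : β.ker = α.range) :
    -- exactness of 0 → (G'')^⋆ → G^⋆ → (G')^⋆ → 0
    (∀ χ'' : G'' →+ QZ, IsOpen ((χ''.ker : AddSubgroup G'') : Set G'') →
        χ''.comp β = 0 → χ'' = 0) ∧
    (∀ χ : G →+ QZ, IsOpen ((χ.ker : AddSubgroup G) : Set G) →
        (χ.comp α = 0 ↔ ∃ χ'' : G'' →+ QZ,
          IsOpen ((χ''.ker : AddSubgroup G'') : Set G'') ∧ χ''.comp β = χ)) ∧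
    (∀ χ' : G' →+ QZ, IsOpen ((χ'.ker : AddSubgroup G') : Set G') →
        ∃ χ : G →+ QZ, IsOpen ((χ.ker : AddSubgroup G) : Set G) ∧ χ.comp α = χ') := by
  obtain ⟨hHopen, hHcomp, hHtd, -⟩ := hH
  have hβα : β.comp α = 0 := by
    ext y
    exact (hexact.ge ⟨y, rfl⟩ : α y ∈ β.ker)
  refine ⟨fun χ'' _ h => (AddMonoidHom.cancel_right hβquot.surjective).mp (by simpa using h),
    fun χ hχ => ⟨fun hχα => hβquot.exists_isOpen_ker_comp_eq hχ ?_, ?_⟩,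
    fun χ' hχ' => hαemb.isInducing.exists_isOpen_ker_comp_eq hHopen hHcomp hHtd hχ'⟩
  · rw [hexact]
    rintro _ ⟨y, rfl⟩
    exact DFunLike.congr_fun hχα y
  · rintro ⟨χ'', -, rfl⟩
    rw [AddMonoidHom.comp_assoc, hβα, AddMonoidHom.comp_zero]

/-- Let `0 → G' → G → G'' → 0` be a short exact sequence of
torsion-by-profinite topological abelian groups with `G''_pf ⊆ β(G_pf)` for suitable
presentations.  Then the induced sequence of continuous-character groups
`0 → (G'')^⋆ → G^⋆ → (G')^⋆ → 0` is exact, where a character `χ : ? →+ ℚ/ℤ` is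
continuous (for the discrete topology on `ℚ/ℤ`) precisely when its kernel is open. -/
theorem dual_sequence_exact
    {G' G G'' : Type*}
    [AddCommGroup G'] [TopologicalSpace G'] [IsTopologicalAddGroup G']
    [AddCommGroup G] [TopologicalSpace G] [IsTopologicalAddGroup G]
    [AddCommGroup G''] [TopologicalSpace G''] [IsTopologicalAddGroup G'']
    [LocallyCompactSpace G'] [T2Space G'] [LocallyCompactSpace G] [T2Space G]
    [LocallyCompactSpace G''] [T2Space G'']
    (H' : AddSubgroup G') (hH' : IsTorsionByProfinitePresentation H')
    (H : AddSubgroup G) (hH : IsTorsionByProfinitePresentation H)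
    (H'' : AddSubgroup G'') (hH'' : IsTorsionByProfinitePresentation H'')
    (α : G' →+ G) (β : G →+ G'')
    (hαcont : Continuous α) (hβcont : Continuous β)
    (hαemb : Topology.IsEmbedding α) (hβquot : Topology.IsQuotientMap β)
    (hαinj : Function.Injective α) (hβsurj : Function.Surjective β)
    (hexact : β.ker = α.range)
    (hsub : (H'' : Set G'') ⊆ β '' (H : Set G)) :
    -- exactness of 0 → (G'')^⋆ → G^⋆ → (G')^⋆ → 0
    (∀ χ'' : G'' →+ QZ, IsOpen ((χ''.ker : AddSubgroup G'') : Set G'') →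
        χ''.comp β = 0 → χ'' = 0) ∧
    (∀ χ : G →+ QZ, IsOpen ((χ.ker : AddSubgroup G) : Set G) →
        (χ.comp α = 0 ↔ ∃ χ'' : G'' →+ QZ,
          IsOpen ((χ''.ker : AddSubgroup G'') : Set G'') ∧ χ''.comp β = χ)) ∧
    (∀ χ' : G' →+ QZ, IsOpen ((χ'.ker : AddSubgroup G') : Set G') →
        ∃ χ : G →+ QZ, IsOpen ((χ.ker : AddSubgroup G) : Set G) ∧ χ.comp α = χ') :=
  dual_sequence_exact_general H hH α β hαemb hβquot hexact
end

section
/- Let {G_i}_{i ∈ I} be an inverse system of topological abelian groups over a cofiltered index set I, where each G_i has a topology generated by open subgroups (i.e., admits a fundamental system of neighborhoods of the identity consisting of open subgroups). Let G = lim_i G_i with the inverse limit topology. Then the canonical map colim_i Hom_cont(G_i, ℚ/ℤ) → Hom_cont(G, ℚ/ℤ) is surjective. If moreover each projection π_i : G → G_i is surjective, this map is bijective. -/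
/-!
The inverse limit topology makes `𝓝 0` in `L` the infimum of the pullbacks of `𝓝 0` along
the projections `π i`; this family is directed, so a neighbourhood of `0` (such as the open
kernel of a character `χ`) already contains `(π k)⁻¹ U` for a single `k` and an open subgroup
`U` of `G k`. Then `χ` factors through `L ⧸ (π k)⁻¹ U`, which embeds into `G k ⧸ U`, and
since `ℚ/ℤ` is divisible, hence an injective `ℤ`-module, the induced character extends to
`G k ⧸ U`.
-/

open Filter Topology

namespace AddMonoidHom

variable {A B : Type*} [AddCommGroup A] [AddCommGroup B]

theorem exists_comp_eq_of_ker_le (g : A →+ B) (χ : A →+ QZ) (hker : g.ker ≤ χ.ker) :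
    ∃ ψ : B →+ QZ, ψ.comp g = χ := by
  obtain ⟨ψ, hψ⟩ := (Module.Baer.of_divisible QZ).extension_property_addMonoidHom
    (QuotientAddGroup.kerLift g) (QuotientAddGroup.kerLift_injective g)
    (QuotientAddGroup.lift g.ker χ hker)
  exact ⟨ψ, ext fun x => congr($hψ (x : A ⧸ g.ker))⟩

theorem exists_comp_eq_of_comap_le (φ : A →+ B) (U : AddSubgroup B) (χ : A →+ QZ)
    (hU : U.comap φ ≤ χ.ker) : ∃ ψ : B →+ QZ, U ≤ ψ.ker ∧ ψ.comp φ = χ := by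
  have hker : ((QuotientAddGroup.mk' U).comp φ).ker ≤ χ.ker := by
    rwa [← comap_ker, QuotientAddGroup.ker_mk']
  obtain ⟨ψ, hψ⟩ := exists_comp_eq_of_ker_le _ χ hker
  refine ⟨ψ.comp (QuotientAddGroup.mk' U), fun u hu => ?_, hψ⟩
  simp [(QuotientAddGroup.eq_zero_iff u).2 hu]

end AddMonoidHom

section InverseLimit

variable {I : Type*} {G : I → Type*} [∀ i, AddCommGroup (G i)]
  {L : Type*} [AddCommGroup L] (π : ∀ i, L →+ G i)

theorem comp_transition_eq_of_comp_proj_eq [Preorder I] (f : ∀ i j, i ≤ j → G j →+ G i)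
    (hπcompat : ∀ i j (h : i ≤ j), (f i j h).comp (π j) = π i)
    {i j k : I} (hik : i ≤ k) (hjk : j ≤ k) (hsurj : Function.Surjective (π k))
    {χi : G i →+ QZ} {χj : G j →+ QZ} (h : χi.comp (π i) = χj.comp (π j)) :
    χi.comp (f i k hik) = χj.comp (f j k hjk) := by
  refine (AddMonoidHom.cancel_right hsurj).1 ?_
  simpa only [AddMonoidHom.comp_assoc, hπcompat] using h

variable [∀ i, TopologicalSpace (G i)]

theorem nhds_zero_eq_iInf_comap_of_isInducing [TopologicalSpace L]
    (hind : Topology.IsInducing (fun x : L => fun i => π i x)) :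
    𝓝 (0 : L) = ⨅ i, comap (π i) (𝓝 0) := by
  rw [hind.nhds_eq_comap, nhds_pi, Filter.pi, comap_iInf]
  simp only [comap_comap, map_zero]
  rfl

variable [Preorder I]

theorem comap_nhds_zero_antitone (f : ∀ i j, i ≤ j → G j →+ G i)
    (hfcont : ∀ i j (h : i ≤ j), Continuous (f i j h))
    (hπcompat : ∀ i j (h : i ≤ j), (f i j h).comp (π j) = π i) :
    Antitone fun i => comap (π i) (𝓝 (0 : G i)) := by
  intro i j hij
  dsimp only
  rw [← hπcompat i j hij, AddMonoidHom.coe_comp, ← comap_comap]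
  exact comap_mono ((hfcont i j hij).tendsto' 0 0 (map_zero _)).le_comap

theorem exists_isOpen_comap_subset_of_mem_nhds_zero [TopologicalSpace L] [Nonempty I]
    [IsDirected I (· ≤ ·)]
    (hbasis : ∀ i, (𝓝 (0 : G i)).HasBasis
      (fun U : AddSubgroup (G i) => IsOpen (U : Set (G i)))
      (fun U : AddSubgroup (G i) => (U : Set (G i))))
    (f : ∀ i j, i ≤ j → G j →+ G i)
    (hfcont : ∀ i j (h : i ≤ j), Continuous (f i j h))
    (hπcompat : ∀ i j (h : i ≤ j), (f i j h).comp (π j) = π i)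
    (hind : Topology.IsInducing (fun x : L => fun i => π i x))
    {V : Set L} (hV : V ∈ 𝓝 0) :
    ∃ (k : I) (U : AddSubgroup (G k)), IsOpen (U : Set (G k)) ∧ π k ⁻¹' U ⊆ V := by
  rw [nhds_zero_eq_iInf_comap_of_isInducing π hind,
    mem_iInf_of_directed (comap_nhds_zero_antitone π f hfcont hπcompat).directed_ge] at hV
  obtain ⟨k, t, ht, htV⟩ := hV
  obtain ⟨U, hUopen, hUt⟩ := (hbasis k).mem_iff.1 ht
  exact ⟨k, U, hUopen, (Set.preimage_mono hUt).trans htV⟩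

end InverseLimit

theorem dual_of_inverse_limit_surjective_general
    {I : Type*} [Preorder I] [Nonempty I] [IsDirected I (· ≤ ·)]
    (G : I → Type*) [∀ i, AddCommGroup (G i)] [∀ i, TopologicalSpace (G i)]
    [∀ i, IsTopologicalAddGroup (G i)]
    (hbasis : ∀ i, (nhds (0 : G i)).HasBasis
      (fun U : AddSubgroup (G i) => IsOpen (U : Set (G i)))
      (fun U : AddSubgroup (G i) => (U : Set (G i))))
    (f : ∀ i j, i ≤ j → G j →+ G i)
    (hfcont : ∀ i j (h : i ≤ j), Continuous (f i j h))
    {L : Type*} [AddCommGroup L] [TopologicalSpace L]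
    (π : ∀ i, L →+ G i)
    (hπcompat : ∀ i j (h : i ≤ j), (f i j h).comp (π j) = π i)
    (hemb : Topology.IsEmbedding (fun x : L => fun i => π i x)) :
    (∀ χ : L →+ QZ, IsOpen ((χ.ker : AddSubgroup L) : Set L) →
      ∃ (i : I) (χi : G i →+ QZ),
        IsOpen ((χi.ker : AddSubgroup (G i)) : Set (G i)) ∧ χi.comp (π i) = χ) ∧
    ((∀ i, Function.Surjective (π i)) →
      ∀ (i j : I) (χi : G i →+ QZ) (χj : G j →+ QZ),
        IsOpen ((χi.ker : AddSubgroup (G i)) : Set (G i)) →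
        IsOpen ((χj.ker : AddSubgroup (G j)) : Set (G j)) →
        χi.comp (π i) = χj.comp (π j) →
        ∃ (k : I) (hik : i ≤ k) (hjk : j ≤ k),
          χi.comp (f i k hik) = χj.comp (f j k hjk)) := by
  refine ⟨fun χ hopen => ?_, fun hsurj i j χi χj _ _ hij => ?_⟩
  · obtain ⟨k, U, hUopen, hUker⟩ := exists_isOpen_comap_subset_of_mem_nhds_zero π hbasis f
      hfcont hπcompat hemb.isInducing (hopen.mem_nhds χ.ker.zero_mem)
    obtain ⟨χk, hUχk, hχk⟩ := (π k).exists_comp_eq_of_comap_le U χ hUker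
    exact ⟨k, χk, AddSubgroup.isOpen_mono hUχk hUopen, hχk⟩
  · obtain ⟨k, hik, hjk⟩ := exists_ge_ge i j
    exact ⟨k, hik, hjk, comp_transition_eq_of_comp_proj_eq π f hπcompat hik hjk (hsurj k) hij⟩

/-- Let `{G i}` be an inverse system of topological abelian groups over a
cofiltered (codirected, nonempty) index set, each `G i` having a fundamental system of
neighborhoods of `0` consisting of open subgroups, with continuous transition maps
`f i j : G j →+ G i` for `i ≤ j`.  Let `L` be its inverse limit with the inverse limit
topology (encoded: `L` embeds topologically into `∏ i, G i` with image the compatible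
families, via the projections `π i`).  Then every continuous character `L →+ ℚ/ℤ`
factors through some `π i` (surjectivity of `colim (G i)^⋆ → L^⋆`); and if all `π i`
are surjective this factorization is essentially unique (bijectivity). -/
theorem dual_of_inverse_limit_surjective
    {I : Type*} [Preorder I] [Nonempty I] [IsDirected I (· ≤ ·)]
    (G : I → Type*) [∀ i, AddCommGroup (G i)] [∀ i, TopologicalSpace (G i)]
    [∀ i, IsTopologicalAddGroup (G i)]
    (hbasis : ∀ i, (nhds (0 : G i)).HasBasis
      (fun U : AddSubgroup (G i) => IsOpen (U : Set (G i)))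
      (fun U : AddSubgroup (G i) => (U : Set (G i))))
    (f : ∀ i j, i ≤ j → G j →+ G i)
    (hfcont : ∀ i j (h : i ≤ j), Continuous (f i j h))
    (hfid : ∀ i, f i i le_rfl = AddMonoidHom.id (G i))
    (hfcomp : ∀ i j k (hij : i ≤ j) (hjk : j ≤ k),
      (f i j hij).comp (f j k hjk) = f i k (hij.trans hjk))
    {L : Type*} [AddCommGroup L] [TopologicalSpace L] [IsTopologicalAddGroup L]
    (π : ∀ i, L →+ G i)
    (hπcompat : ∀ i j (h : i ≤ j), (f i j h).comp (π j) = π i)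
    (hemb : Topology.IsEmbedding (fun x : L => fun i => π i x))
    (hrange : Set.range (fun x : L => fun i => π i x) =
      {g : ∀ i, G i | ∀ i j (h : i ≤ j), f i j h (g j) = g i}) :
    (∀ χ : L →+ QZ, IsOpen ((χ.ker : AddSubgroup L) : Set L) →
      ∃ (i : I) (χi : G i →+ QZ),
        IsOpen ((χi.ker : AddSubgroup (G i)) : Set (G i)) ∧ χi.comp (π i) = χ) ∧
    ((∀ i, Function.Surjective (π i)) →
      ∀ (i j : I) (χi : G i →+ QZ) (χj : G j →+ QZ),
        IsOpen ((χi.ker : AddSubgroup (G i)) : Set (G i)) →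
        IsOpen ((χj.ker : AddSubgroup (G j)) : Set (G j)) →
        χi.comp (π i) = χj.comp (π j) →
        ∃ (k : I) (hik : i ≤ k) (hjk : j ≤ k),
          χi.comp (f i k hik) = χj.comp (f j k hjk)) :=
  dual_of_inverse_limit_surjective_general G hbasis f hfcont π hπcompat hemb
end

section
/- Let J be a profinite abelian group. Then the Tate module of J vanishes: lim_n (n-torsion of J) = 0, where the inverse limit is over positive integers n ordered by divisibility, with transition maps given by multiplication (from mn-torsion to n-torsion, x ↦ m·x). -/
/-!
An open normal subgroup `H` of a compact group has finite index `c`, so it contains every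
`c`-fold multiple, in particular `x n = c • x (c * n)`. In a profinite group the open normal
subgroups intersect trivially, so `x n = 0`.
-/

@[to_additive]
theorem eq_one_of_forall_mem_openNormalSubgroup {G : Type*} [Group G] [TopologicalSpace G]
    [IsTopologicalGroup G] [CompactSpace G] [TotallyDisconnectedSpace G] {g : G}
    (hg : ∀ H : OpenNormalSubgroup G, g ∈ H) : g = 1 := by
  by_contra hne
  obtain ⟨H, hH⟩ :=
    ProfiniteGrp.exist_openNormalSubgroup_sub_open_nhds_of_one isOpen_compl_singleton (Ne.symm hne)
  exact hH (hg H) rfl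

theorem tate_module_of_profinite_eq_zero_general
    {J : Type*} [AddCommGroup J] [TopologicalSpace J] [IsTopologicalAddGroup J]
    [CompactSpace J] [TotallyDisconnectedSpace J]
    (x : ℕ+ → J)
    (hcompat : ∀ m n : ℕ+, (m : ℕ) • x (m * n) = x n) :
    ∀ n : ℕ+, x n = 0 := by
  intro n
  refine eq_zero_of_forall_mem_openNormalAddSubgroup fun H ↦ ?_
  have hindex : 0 < H.index := Nat.pos_of_ne_zero AddSubgroup.index_ne_zero_of_finite
  rw [← hcompat ⟨H.index, hindex⟩ n]
  exact H.nsmul_index_mem _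

/-- The Tate module of a profinite abelian group `J` vanishes: every
compatible family `(x_n)_{n ≥ 1}` with `x_n ∈ J[n]` and `m • x_{m n} = x_n` (the inverse
limit over `ℕ` ordered by divisibility, transition maps given by multiplication) is zero. -/
theorem tate_module_of_profinite_eq_zero
    {J : Type*} [AddCommGroup J] [TopologicalSpace J] [IsTopologicalAddGroup J]
    [CompactSpace J] [T2Space J] [TotallyDisconnectedSpace J]
    (x : ℕ+ → J)
    (htor : ∀ n : ℕ+, (n : ℕ) • x n = 0)
    (hcompat : ∀ m n : ℕ+, (m : ℕ) • x (m * n) = x n) :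
    ∀ n : ℕ+, x n = 0 :=
  tate_module_of_profinite_eq_zero_general x hcompat
end

section
/- Let 0 → F → P → Q → 0 be an exact sequence of topological abelian groups where the map P → Q is a topological quotient map, Q is profinite, and χ : P → ℝ/ℤ is a continuous homomorphism such that χ(F) is finite of exponent m. Then the homomorphism m·χ factors through a continuous homomorphism Q → ℝ/ℤ, and consequently χ(P) is finite. -/
/-!
Since `ker g = F` is killed by `m • χ` and `g` is a quotient map, `m • χ` descends to a
continuous character `ψ` of `Q`. The circle has no small subgroups (doubling an element of
length at most `1/4` doubles its length), while a profinite group has arbitrarily small open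
subgroups; hence `ker ψ` is open, so of finite index, and `ψ` has finite image. Finally `χ(P)`
lies in the preimage of that image under multiplication by `m`, whose fibres are cosets of the
finite `m`-torsion of the circle.
-/

open Topology Metric

namespace UnitAddCircle

theorem norm_two_nsmul {y : UnitAddCircle} (hy : ‖y‖ ≤ 1 / 4) :
    ‖2 • y‖ = 2 * ‖y‖ := by
  obtain ⟨x, rfl⟩ : ∃ x : ℝ, (x : UnitAddCircle) = y := QuotientAddGroup.mk_surjective y
  set t := x - round x
  have hrep : (t : UnitAddCircle) = x := by simp [t]
  have hnorm : ‖(t : UnitAddCircle)‖ = |t| := by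
    rw [norm_eq, round_sub_intCast, sub_self, Int.cast_zero, sub_zero]
  rw [← hrep, hnorm] at hy ⊢
  have h2t : |2 * t| ≤ |(1 : ℝ)| / 2 := by rw [abs_mul, abs_two, abs_one]; linarith
  rw [← AddCircle.coe_nsmul, nsmul_eq_mul, Nat.cast_ofNat,
    (AddCircle.norm_coe_eq_abs_iff 1 one_ne_zero).2 h2t, abs_mul, abs_two]

theorem addSubgroup_eq_bot_of_subset_ball {H : AddSubgroup UnitAddCircle}
    (hH : (H : Set UnitAddCircle) ⊆ ball 0 (1 / 4)) : H = ⊥ := by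
  have hsmall : ∀ y ∈ H, ‖y‖ < 1 / 4 := fun y hy ↦ mem_ball_zero_iff.1 (hH hy)
  rw [AddSubgroup.eq_bot_iff_forall]
  intro y hy
  have hpow : ∀ k : ℕ, ‖2 ^ k • y‖ = 2 ^ k * ‖y‖ := by
    intro k
    induction k with
    | zero => simp
    | succ k ih =>
      rw [pow_succ, mul_nsmul, norm_two_nsmul (hsmall _ (H.nsmul_mem hy _)).le, ih, pow_succ]
      ring
  by_contra hne
  obtain ⟨k, hk⟩ := pow_unbounded_of_one_lt (1 / 4 / ‖y‖) one_lt_two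
  have hlt := hsmall _ (H.nsmul_mem hy (2 ^ k))
  rw [hpow] at hlt
  rw [div_lt_iff₀ (norm_pos_iff.2 hne)] at hk
  linarith

theorem finite_range_of_continuous {Q : Type*} [AddGroup Q] [TopologicalSpace Q]
    [IsTopologicalAddGroup Q] [CompactSpace Q] [T2Space Q] [TotallyDisconnectedSpace Q]
    (ψ : Q →+ UnitAddCircle) (hψ : Continuous ψ) : (Set.range ψ).Finite := by
  obtain ⟨W, hW, hW0, hWball⟩ := compact_exists_isClopen_in_isOpen
    (isOpen_ball.preimage hψ) (by simp : (0 : Q) ∈ ψ ⁻¹' ball 0 (1 / 4))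
  obtain ⟨H, hHW⟩ := IsTopologicalAddGroup.exist_openAddSubgroup_sub_clopen_nhds_of_zero hW hW0
  have hHker : H.toAddSubgroup ≤ ψ.ker := (AddSubgroup.map_eq_bot_iff _).1 <|
    addSubgroup_eq_bot_of_subset_ball <| by
      rintro _ ⟨q, hq, rfl⟩
      exact hWball (hHW hq)
  have : Finite (Q ⧸ ψ.ker) :=
    AddSubgroup.quotient_finite_of_isOpen _ (AddSubgroup.isOpen_mono hHker H.isOpen)
  rw [← ψ.coe_range, ← Set.finite_coe_iff]
  exact .of_equiv _ (QuotientAddGroup.quotientKerEquivRange ψ).toEquiv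

end UnitAddCircle

theorem AddMonoidHom.finite_preimage_of_finite_ker {G H : Type*} [AddGroup G] [AddGroup H]
    (f : G →+ H) (hf : (f.ker : Set G).Finite) {S : Set H} (hS : S.Finite) :
    (f ⁻¹' S).Finite := by
  refine hS.preimage' fun s _ ↦ ?_
  rcases (f ⁻¹' {s}).eq_empty_or_nonempty with hempty | ⟨x, hx⟩
  · simp [hempty]
  · refine (hf.image (x + ·)).subset fun y hy ↦ ⟨-x + y, ?_, add_neg_cancel_left x y⟩
    simp_all

theorem Topology.IsQuotientMap.exists_continuous_addMonoidHom_comp_eq {P Q R : Type*}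
    [AddGroup P] [TopologicalSpace P] [AddGroup Q] [TopologicalSpace Q] [AddGroup R]
    [TopologicalSpace R] {g : P →+ Q} (hg : IsQuotientMap g) (f : P →+ R) (hf : Continuous f)
    (hker : g.ker ≤ f.ker) : ∃ ψ : Q →+ R, Continuous ψ ∧ ∀ x, ψ (g x) = f x := by
  let ψ := g.liftOfSurjective hg.surjective ⟨f, hker⟩
  have hψg : ∀ x, ψ (g x) = f x := g.liftOfRightInverse_comp_apply _ _ ⟨f, hker⟩
  refine ⟨ψ, hg.continuous_iff.2 ?_, hψg⟩
  simpa only [Function.comp_def, hψg] using hf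

theorem character_factors_and_finite_image_general
    {P Q : Type*} [AddCommGroup P] [TopologicalSpace P]
    [AddCommGroup Q] [TopologicalSpace Q] [IsTopologicalAddGroup Q]
    [CompactSpace Q] [T2Space Q] [TotallyDisconnectedSpace Q]
    (F : AddSubgroup P) (g : P →+ Q)
    (hker : g.ker = F)
    (hg_quot : Topology.IsQuotientMap g)
    (χ : P →+ AddCircle (1 : ℝ)) (hχ : Continuous χ)
    (m : ℕ) (hm : 0 < m)
    (hFexp : ∀ x ∈ F, m • χ x = 0) :
    (∃ ψ : Q →+ AddCircle (1 : ℝ), Continuous ψ ∧ ∀ x : P, ψ (g x) = m • χ x) ∧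
    (Set.range χ).Finite := by
  obtain ⟨ψ, hψ, hψg⟩ :=
    hg_quot.exists_continuous_addMonoidHom_comp_eq (m • χ) (hχ.const_smul m) (hker ▸ hFexp)
  have htorsion : ((nsmulAddMonoidHom (α := UnitAddCircle) m).ker : Set UnitAddCircle).Finite :=
    AddCircle.finite_torsion _ hm
  have hψfin := UnitAddCircle.finite_range_of_continuous ψ hψ
  refine ⟨⟨ψ, hψ, hψg⟩,
    (AddMonoidHom.finite_preimage_of_finite_ker _ htorsion hψfin).subset ?_⟩
  rintro _ ⟨x, rfl⟩
  exact ⟨g x, hψg x⟩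

/-- Let `0 → F → P → Q → 0` be an exact sequence of topological
abelian groups where `g : P → Q` is a topological quotient map and `Q` is profinite
(compact, Hausdorff, totally disconnected).  Let `χ : P → ℝ/ℤ` be a continuous
homomorphism such that `χ(F)` is finite of exponent `m > 0`.  Then `m·χ` factors
through a continuous homomorphism `Q → ℝ/ℤ`, and consequently `χ(P)` is finite. -/
theorem character_factors_and_finite_image
    {P Q : Type*} [AddCommGroup P] [TopologicalSpace P] [IsTopologicalAddGroup P]
    [AddCommGroup Q] [TopologicalSpace Q] [IsTopologicalAddGroup Q]
    [CompactSpace Q] [T2Space Q] [TotallyDisconnectedSpace Q]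
    (F : AddSubgroup P) (g : P →+ Q)
    (hg_surj : Function.Surjective g) (hker : g.ker = F)
    (hg_quot : Topology.IsQuotientMap g)
    (χ : P →+ AddCircle (1 : ℝ)) (hχ : Continuous χ)
    (m : ℕ) (hm : 0 < m)
    (hFfin : (χ '' (F : Set P)).Finite)
    (hFexp : ∀ x ∈ F, m • χ x = 0) :
    (∃ ψ : Q →+ AddCircle (1 : ℝ), Continuous ψ ∧ ∀ x : P, ψ (g x) = m • χ x) ∧
    (Set.range χ).Finite :=
  character_factors_and_finite_image_general F g hker hg_quot χ hχ m hm hFexp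
end
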